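/- Let α ∈ (0,1) and let (x_n)_{n≥0} be real-valued random variables on a probability space such that almost surely x_n < x_{n+1} for all n ≥ 0, and suppose there is a constant C with E[(x_n − x_k)^{1+α}] ≤ C·(n−k)^{1+α} for all integers n > k ≥ 0. Then almost surely there exists a unit flux of finite energy from index 0 to infinity: an antisymmetric function F : ℕ × ℕ → ℝ such that for every n the sum Σ_k F(n,k) converges absolutely and equals 1 if n = 0 and 0 otherwise, and Σ_{0≤n<k} max(1, (x_k − x_n)^{1+α})·F(n,k)² < ∞. (This expresses that the random walk on the random point set S = {x_n} with jump weights bounded below by a multiple of φ_{p,α}(|x−y|) = min(1,|x−y|^{−1−α}) is almost surely transient.) -/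

import Mathlib

/-!
Split the indices into the dyadic levels `{2^m - 1, …, 2^(m+1) - 2}`, of size `2^m`, and let
every index of level `m` pass the mass `2^(-m)` it receives on evenly to the `2^(m+1)` indices
of level `m + 1`. This deterministic flux is a unit flux from `0` to infinity. An edge leaving
level `m` carries `2^(-2m-1)` and joins indices at distance at most `2^(m+2)`, so by the moment
bound the expected energy of the `2^(2m+1)` such edges is `O(4^(-m) + 2^((α - 1) m))`. This is
summable because `α < 1`, and finite expected energy forces almost surely finite energy.
-/

open MeasureTheory
open scoped ENNReal

namespace Transience1D

def level (n : ℕ) : ℕ := Nat.log 2 (n + 1)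

lemma level_eq_iff {n m : ℕ} : level n = m ↔ 2 ^ m ≤ n + 1 ∧ n + 1 < 2 ^ (m + 1) :=
  Nat.log_eq_iff (Or.inr ⟨one_lt_two, n.succ_ne_zero⟩)

lemma level_eq_zero_iff {n : ℕ} : level n = 0 ↔ n = 0 := by
  rw [level_eq_iff]; omega

lemma level_mono {n k : ℕ} (h : n ≤ k) : level n ≤ level k :=
  Nat.log_mono_right (Nat.succ_le_succ h)

def levelSet (m : ℕ) : Finset ℕ := Finset.Ico (2 ^ m - 1) (2 ^ (m + 1) - 1)

lemma mem_levelSet {m k : ℕ} : k ∈ levelSet m ↔ level k = m := by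
  have := Nat.one_le_two_pow (n := m)
  rw [levelSet, Finset.mem_Ico, level_eq_iff]
  omega

lemma card_levelSet (m : ℕ) : (levelSet m).card = 2 ^ m := by
  rw [levelSet, Nat.card_Ico, pow_succ]
  have := Nat.one_le_two_pow (n := m)
  omega

lemma hasSum_ite_level_eq {M : Type*} [AddCommMonoid M] [TopologicalSpace M] (m : ℕ)
    (c : M) : HasSum (fun k => if level k = m then c else 0) (2 ^ m • c) := by
  simp_rw [← mem_levelSet, ← card_levelSet, ← Finset.sum_const]
  have := hasSum_sum_of_ne_finset_zero (L := .unconditional ℕ)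
    (f := fun k => if k ∈ levelSet m then c else 0) (fun k hk => if_neg hk)
  rwa [Finset.sum_ite_mem, Finset.inter_self] at this

lemma tsum_comp_level (f : ℕ → ℝ≥0∞) : ∑' n, f (level n) = ∑' m, 2 ^ m * f m := by
  calc ∑' n, f (level n) = ∑' n, ∑' m, if level n = m then f m else 0 := by
        simp_rw [tsum_ite_eq']
    _ = ∑' m, 2 ^ m * f m := by
        rw [ENNReal.tsum_comm]
        simp_rw [(hasSum_ite_level_eq _ _).tsum_eq, nsmul_eq_mul, Nat.cast_pow, Nat.cast_ofNat]

noncomputable def levelFlux (m : ℕ) : ℝ := (2 ^ m)⁻¹ / 2 ^ (m + 1)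

noncomputable def dyadicFlux (n k : ℕ) : ℝ :=
  (if level k = level n + 1 then levelFlux (level n) else 0) -
    (if level n = level k + 1 then levelFlux (level k) else 0)

lemma dyadicFlux_antisymm (n k : ℕ) : dyadicFlux n k = -dyadicFlux k n := by
  unfold dyadicFlux; ring

lemma dyadicFlux_of_lt {n k : ℕ} (h : n < k) :
    dyadicFlux n k = if level k = level n + 1 then levelFlux (level n) else 0 := by
  have := level_mono h.le
  rw [dyadicFlux, if_neg (show ¬ level n = level k + 1 by omega), sub_zero]

lemma hasSum_dyadicFlux (n : ℕ) : HasSum (dyadicFlux n) (if n = 0 then 1 else 0) := by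
  have hout := hasSum_ite_level_eq (level n + 1) (levelFlux (level n))
  by_cases h0 : level n = 0
  · have hin : ∀ k, ¬ level n = level k + 1 := by omega
    rw [if_pos (level_eq_zero_iff.1 h0)]
    convert hout using 1
    · ext k; simp [dyadicFlux, hin]
    · simp [h0, levelFlux]
  · obtain ⟨m, hm⟩ := Nat.exists_eq_add_one_of_ne_zero h0
    have hin : HasSum (fun k => if level n = level k + 1 then levelFlux (level k) else 0)
        (2 ^ m • levelFlux m) := by
      convert hasSum_ite_level_eq m (levelFlux m) using 2 with k
      simp only [hm, add_left_inj, eq_comm (a := m)]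
      split_ifs with h <;> simp [h]
    rw [if_neg (mt level_eq_zero_iff.2 h0)]
    have hbalance : 2 ^ (level n + 1) • levelFlux (level n) - 2 ^ m • levelFlux m = 0 := by
      simp only [hm, levelFlux, nsmul_eq_mul, Nat.cast_pow, Nat.cast_ofNat]
      field_simp
      ring
    rw [← hbalance]
    exact hout.sub hin

lemma ofReal_max_one_mul_le (t c : ℝ) :
    ENNReal.ofReal (max 1 t * c) ≤ ENNReal.ofReal c * (1 + ENNReal.ofReal t) := by
  rw [ENNReal.ofReal_mul (le_max_of_le_left zero_le_one), ENNReal.ofReal_max, ENNReal.ofReal_one,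
    mul_comm]
  exact mul_le_mul_right (max_le_add_of_nonneg zero_le zero_le) _

lemma lintegral_ofReal_max_one_mul_le {Ω : Type*} [MeasurableSpace Ω] (μ : Measure Ω)
    [IsProbabilityMeasure μ] (g : Ω → ℝ) (c : ℝ) :
    ∫⁻ ω, ENNReal.ofReal (max 1 (g ω) * c) ∂μ ≤
      ENNReal.ofReal c * (1 + ∫⁻ ω, ENNReal.ofReal (g ω) ∂μ) := by
  calc ∫⁻ ω, ENNReal.ofReal (max 1 (g ω) * c) ∂μ
      ≤ ∫⁻ ω, ENNReal.ofReal c * (1 + ENNReal.ofReal (g ω)) ∂μ :=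
        lintegral_mono fun ω => ofReal_max_one_mul_le (g ω) c
    _ = ENNReal.ofReal c * (1 + ∫⁻ ω, ENNReal.ofReal (g ω) ∂μ) := by
        rw [lintegral_const_mul' _ _ ENNReal.ofReal_ne_top, lintegral_add_left measurable_const,
          lintegral_const, measure_univ, mul_one]

lemma ae_summable_of_tsum_lintegral_ne_top {ι Ω : Type*} [Countable ι] [MeasurableSpace Ω]
    {μ : Measure Ω} {f : ι → Ω → ℝ} (hf : ∀ i, AEMeasurable (f i) μ) (hf0 : ∀ i ω, 0 ≤ f i ω)
    (h : ∑' i, ∫⁻ ω, ENNReal.ofReal (f i ω) ∂μ ≠ ∞) :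
    ∀ᵐ ω ∂μ, Summable fun i => f i ω := by
  have hmeas i := (hf i).ennreal_ofReal
  rw [← lintegral_tsum hmeas] at h
  filter_upwards [ae_lt_top' (AEMeasurable.tsum hmeas) h] with ω hω
  exact (ENNReal.summable_toReal hω.ne).congr fun i => ENNReal.toReal_ofReal (hf0 i ω)

lemma sub_le_two_pow_level_add_two {n k : ℕ} (h : level k = level n + 1) :
    (k : ℝ) - n ≤ 2 ^ (level n + 2) := by
  have hk : k + 1 < 2 ^ (level n + 2) := (level_eq_iff.1 h).2
  have : (k : ℝ) + 1 ≤ 2 ^ (level n + 2) := by exact_mod_cast hk.le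
  linarith [(n.cast_nonneg : (0 : ℝ) ≤ n)]

noncomputable def edgeEnergyBound (C s : ℝ) (m : ℕ) : ℝ :=
  levelFlux m ^ 2 * (1 + |C| * ((2 : ℝ) ^ (m + 2)) ^ s)

noncomputable def levelEnergyBound (C s : ℝ) (m : ℕ) : ℝ :=
  2 ^ m * 2 ^ (m + 1) * edgeEnergyBound C s m

lemma levelEnergyBound_nonneg (C s : ℝ) (m : ℕ) : 0 ≤ levelEnergyBound C s m := by
  unfold levelEnergyBound edgeEnergyBound levelFlux
  positivity

lemma summable_levelEnergyBound (C : ℝ) {s : ℝ} (hs : s < 2) :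
    Summable (levelEnergyBound C s) := by
  have hr : (2 : ℝ) ^ s / 4 < 1 := by
    rw [div_lt_one four_pos]
    calc (2 : ℝ) ^ s < 2 ^ (2 : ℝ) := Real.rpow_lt_rpow_of_exponent_lt one_lt_two hs
      _ = 4 := by norm_num
  have hgeom := (summable_geometric_of_lt_one (by positivity) (by norm_num : (1 / 4 : ℝ) < 1)).add
    ((summable_geometric_of_lt_one (by positivity) hr).mul_left (|C| * (2 ^ s) ^ 2))
  refine (hgeom.mul_left (1 / 2)).congr fun m => ?_
  have h4 : (4 : ℝ) ^ m = 2 ^ m * 2 ^ m := by rw [← mul_pow]; norm_num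
  rw [levelEnergyBound, edgeEnergyBound, levelFlux, ← Real.rpow_pow_comm zero_le_two, div_pow,
    div_pow, h4]
  field_simp
  ring

lemma dyadicFlux_energy_le (C : ℝ) {s : ℝ} (hs : 0 ≤ s) (n k : ℕ) :
    (if n < k then
      ENNReal.ofReal (dyadicFlux n k ^ 2) * (1 + ENNReal.ofReal (C * ((k : ℝ) - n) ^ s))
    else 0) ≤
    if level k = level n + 1 then ENNReal.ofReal (edgeEnergyBound C s (level n)) else 0 := by
  by_cases hnk : n < k
  swap
  · rw [if_neg hnk]
    exact zero_le
  rw [if_pos hnk, dyadicFlux_of_lt hnk]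
  split_ifs with hl
  · have hd : 0 ≤ (k : ℝ) - n := sub_nonneg.2 (by exact_mod_cast hnk.le)
    have hdist : C * ((k : ℝ) - n) ^ s ≤ |C| * ((2 : ℝ) ^ (level n + 2)) ^ s :=
      calc C * ((k : ℝ) - n) ^ s ≤ |C| * ((k : ℝ) - n) ^ s := by gcongr; exact le_abs_self C
        _ ≤ |C| * ((2 : ℝ) ^ (level n + 2)) ^ s := by
          gcongr; exact sub_le_two_pow_level_add_two hl
    rw [edgeEnergyBound, ENNReal.ofReal_mul (sq_nonneg _),
      ENNReal.ofReal_add zero_le_one (by positivity), ENNReal.ofReal_one]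
    gcongr
  · simp

lemma tsum_dyadicFlux_energy_ne_top (C : ℝ) {s : ℝ} (hs0 : 0 ≤ s) (hs2 : s < 2) :
    ∑' p : ℕ × ℕ, (if p.1 < p.2 then ENNReal.ofReal (dyadicFlux p.1 p.2 ^ 2) *
      (1 + ENNReal.ofReal (C * ((p.2 : ℝ) - p.1) ^ s)) else 0) ≠ ∞ := by
  refine ne_top_of_le_ne_top ?_
    (ENNReal.tsum_le_tsum fun p => dyadicFlux_energy_le C hs0 p.1 p.2)
  rw [ENNReal.tsum_prod (f := fun n k =>
    if level k = level n + 1 then ENNReal.ofReal (edgeEnergyBound C s (level n)) else 0)]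
  simp_rw [(hasSum_ite_level_eq _ _).tsum_eq]
  rw [tsum_comp_level fun m => 2 ^ (m + 1) • ENNReal.ofReal (edgeEnergyBound C s m)]
  have hterm (m : ℕ) : (2 : ℝ≥0∞) ^ m * (2 ^ (m + 1) • ENNReal.ofReal (edgeEnergyBound C s m)) =
      ENNReal.ofReal (levelEnergyBound C s m) := by
    rw [levelEnergyBound, ENNReal.ofReal_mul (by positivity), ENNReal.ofReal_mul (by positivity),
      nsmul_eq_mul, mul_assoc, ENNReal.ofReal_pow zero_le_two, ENNReal.ofReal_pow zero_le_two,
      ENNReal.ofReal_ofNat, Nat.cast_pow, Nat.cast_ofNat]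
  simp_rw [hterm]
  rw [← ENNReal.ofReal_tsum_of_nonneg (levelEnergyBound_nonneg C s)
    (summable_levelEnergyBound C hs2)]
  exact ENNReal.ofReal_ne_top

end Transience1D

open Transience1D in
theorem transience_one_dim_points (α : ℝ) (hα0 : 0 < α) (hα1 : α < 1)
    {Ω : Type*} [MeasurableSpace Ω] (μ : Measure Ω) [IsProbabilityMeasure μ]
    (x : ℕ → Ω → ℝ) (hmeas : ∀ n, Measurable (x n))
    (C : ℝ)
    (hmom : ∀ n k : ℕ, k < n →
      ∫⁻ ω, ENNReal.ofReal ((x n ω - x k ω) ^ (1 + α)) ∂μ ≤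
        ENNReal.ofReal (C * ((n : ℝ) - (k : ℝ)) ^ (1 + α))) :
    ∀ᵐ ω ∂μ, ∃ F : ℕ → ℕ → ℝ,
      (∀ n k : ℕ, F n k = - F k n) ∧
      (∀ n : ℕ, Summable (fun k : ℕ => |F n k|)) ∧
      (∀ n : ℕ, ∑' k : ℕ, F n k = if n = 0 then 1 else 0) ∧
      Summable (fun p : ℕ × ℕ =>
        if p.1 < p.2 then
          max 1 ((x p.2 ω - x p.1 ω) ^ (1 + α)) * F p.1 p.2 ^ 2
        else 0) := by
  have henergy : ∀ᵐ ω ∂μ, Summable fun p : ℕ × ℕ => if p.1 < p.2 then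
      max 1 ((x p.2 ω - x p.1 ω) ^ (1 + α)) * dyadicFlux p.1 p.2 ^ 2 else 0 := by
    refine ae_summable_of_tsum_lintegral_ne_top (fun p => ?_) (fun p ω => ?_) ?_
    · split_ifs
      · fun_prop
      · exact aemeasurable_const
    · split_ifs
      · exact mul_nonneg (le_max_of_le_left zero_le_one) (sq_nonneg _)
      · exact le_rfl
    · refine ne_top_of_le_ne_top (tsum_dyadicFlux_energy_ne_top C (s := 1 + α) (by linarith)
        (by linarith)) (ENNReal.tsum_le_tsum fun p => ?_)
      split_ifs with h
      · exact (lintegral_ofReal_max_one_mul_le μ _ _).trans (by gcongr; exact hmom _ _ h)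
      · simp
  filter_upwards [henergy] with ω hω
  exact ⟨dyadicFlux, dyadicFlux_antisymm, fun n => (hasSum_dyadicFlux n).summable.abs,
    fun n => (hasSum_dyadicFlux n).tsum_eq, hω⟩
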